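/- arXiv:0707.3937 — 5 statements merged into one kernel-verified Lean document; each statement's English description precedes it below -/
import Mathlib

section
/- Let W be a (ungraded, for simplicity) module over a commutative ring K containing Q. Equip the tensor algebra T(W) with its standard Hopf algebra structure where every element of W is primitive (the shuffle coproduct Δ). Define the modified shuffle operator s := μ ∘ Δ : T(W) → T(W), where μ is multiplication. Then for any elements g_1, ..., g_p of the free Lie algebra L(W) ⊆ T(W) (i.e., primitive elements), one has s(g_1 ⋯ g_p) ≡ 2^p · g_1 ⋯ g_p modulo the submodule F_{p−1} spanned by products of at most p−1 elements of L(W). -/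
/-!
Expanding `Δ(g₁ ⋯ g_p) = ∏ (gᵢ ⊗ 1 + 1 ⊗ gᵢ)` gives one term for each splitting of
`g₁, …, g_p` into two complementary order-preserving subsequences, so `s(g₁ ⋯ g_p)` is a sum of
`2^p` products of the `gᵢ` in permuted orders. Since the commutator of two primitive elements is
again primitive, swapping two adjacent primitive factors of a product of `p` of them changes it by
a product of `p - 1` primitive elements; hence each of the `2^p` terms is `g₁ ⋯ g_p` modulo
`F_{p-1}`.
-/

open scoped TensorProduct

/-- The shuffle coproduct on the tensor algebra: the algebra map determined by
declaring every element of `W` primitive. -/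
noncomputable def comul (K W : Type*) [CommRing K] [AddCommGroup W] [Module K W] :
    TensorAlgebra K W →ₐ[K] TensorAlgebra K W ⊗[K] TensorAlgebra K W :=
  TensorAlgebra.lift K
    ((Algebra.TensorProduct.includeLeft.toLinearMap ∘ₗ TensorAlgebra.ι K) +
     (Algebra.TensorProduct.includeRight.toLinearMap ∘ₗ TensorAlgebra.ι K))

/-- The modified shuffle operator `s = μ ∘ Δ`. -/
noncomputable def shuffleOp (K W : Type*) [CommRing K] [AddCommGroup W] [Module K W] :
    TensorAlgebra K W →ₗ[K] TensorAlgebra K W :=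
  LinearMap.mul' K (TensorAlgebra K W) ∘ₗ (comul K W).toLinearMap

/-- The filtration of the tensor algebra by products of at most `q` primitive elements. -/
noncomputable def Filt (K W : Type*) [CommRing K] [AddCommGroup W] [Module K W] (q : ℕ) :
    Submodule K (TensorAlgebra K W) :=
  Submodule.span K {x | ∃ l : List (TensorAlgebra K W), l.length ≤ q ∧
    (∀ a ∈ l, comul K W a = a ⊗ₜ 1 + 1 ⊗ₜ a) ∧ x = l.prod}

def splits {α : Type*} : List α → List (List α × List α)
  | [] => [([], [])]
  | a :: t => (splits t).map (fun p => (a :: p.1, p.2)) ++ (splits t).map (fun p => (p.1, a :: p.2))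

theorem length_splits {α : Type*} (l : List α) : (splits l).length = 2 ^ l.length := by
  induction l with
  | nil => rfl
  | cons a t ih => simp only [splits, List.length_append, List.length_map, ih, List.length_cons,
      pow_succ, mul_two]

theorem perm_of_mem_splits {α : Type*} {l : List α} {p : List α × List α} (hp : p ∈ splits l) :
    (p.1 ++ p.2).Perm l := by
  induction l generalizing p with
  | nil => simp_all [splits]
  | cons a t ih =>
    simp only [splits, List.mem_append, List.mem_map] at hp
    rcases hp with ⟨q, hq, rfl⟩ | ⟨q, hq, rfl⟩
    · exact (ih hq).cons a
    · exact List.perm_middle.trans ((ih hq).cons a)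

section Primitive

variable {K W : Type*} [CommRing K] [AddCommGroup W] [Module K W]

def IsPrimitive (a : TensorAlgebra K W) : Prop :=
  comul K W a = a ⊗ₜ 1 + 1 ⊗ₜ a

theorem IsPrimitive.commutator {a b : TensorAlgebra K W} (ha : IsPrimitive a)
    (hb : IsPrimitive b) : IsPrimitive (a * b - b * a) := by
  rw [IsPrimitive] at ha hb ⊢
  simp only [map_sub, map_mul, ha, hb, add_mul, mul_add, Algebra.TensorProduct.tmul_mul_tmul,
    one_mul, mul_one, TensorProduct.sub_tmul, TensorProduct.tmul_sub]
  abel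

theorem list_prod_mem_filt {l : List (TensorAlgebra K W)} (hl : ∀ a ∈ l, IsPrimitive a)
    {q : ℕ} (hq : l.length ≤ q) : l.prod ∈ Filt K W q :=
  Submodule.subset_span ⟨l, hq, hl, rfl⟩

theorem mul_mem_filt_succ {a v : TensorAlgebra K W} (ha : IsPrimitive a) {q : ℕ}
    (hv : v ∈ Filt K W q) : a * v ∈ Filt K W (q + 1) := by
  induction hv using Submodule.span_induction with
  | mem v hv =>
    obtain ⟨l, hlq, hl, rfl⟩ := hv
    rw [← List.prod_cons]
    exact list_prod_mem_filt (List.forall_mem_cons.2 ⟨ha, hl⟩) (Nat.succ_le_succ hlq)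
  | zero => simp
  | add u v _ _ hu hv => rw [mul_add]; exact add_mem hu hv
  | smul c u _ hu => rw [mul_smul_comm]; exact Submodule.smul_mem _ _ hu

theorem List.Perm.prod_smodEq_filt {l₁ l₂ : List (TensorAlgebra K W)} (h : l₁.Perm l₂)
    (hl : ∀ a ∈ l₁, IsPrimitive a) : l₁.prod ≡ l₂.prod [SMOD Filt K W (l₁.length - 1)] := by
  induction h with
  | nil => rfl
  | @cons a l₁ l₂ h ih =>
    by_cases hne : l₁ = []
    · subst hne; rw [h.nil_eq]
    have hmem := mul_mem_filt_succ (hl a List.mem_cons_self)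
      (SModEq.sub_mem.1 (ih fun b hb => hl b (List.mem_cons_of_mem a hb)))
    rw [Nat.sub_one_add_one (List.length_pos_iff.2 hne).ne', mul_sub] at hmem
    simpa only [SModEq.sub_mem, List.prod_cons, List.length_cons, Nat.add_sub_cancel]
  | swap a b l =>
    have hb := hl b (by simp)
    have ha := hl a (by simp)
    rw [SModEq.sub_mem, show (b :: a :: l).prod - (a :: b :: l).prod = ((b * a - a * b) :: l).prod
      by simp only [List.prod_cons, ← mul_assoc, sub_mul]]
    refine list_prod_mem_filt (List.forall_mem_cons.2 ⟨hb.commutator ha, ?_⟩) (by simp)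
    exact fun c hc => hl c (by simp [hc])
  | trans h₁₂ _ ih₁₂ ih₂₃ =>
    exact (ih₁₂ hl).trans <| h₁₂.length_eq ▸ ih₂₃ fun b hb => hl b (h₁₂.mem_iff.2 hb)

theorem comul_list_prod {l : List (TensorAlgebra K W)} (hl : ∀ a ∈ l, IsPrimitive a) :
    comul K W l.prod = ((splits l).map fun p => p.1.prod ⊗ₜ[K] p.2.prod).sum := by
  induction l with
  | nil => simp [splits, Algebra.TensorProduct.one_def]
  | cons a t ih =>
    rw [List.forall_mem_cons] at hl
    rw [List.prod_cons, map_mul, hl.1, ih hl.2, add_mul, ← List.sum_map_mul_left,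
      ← List.sum_map_mul_left]
    simp [splits, Function.comp_def, Algebra.TensorProduct.tmul_mul_tmul]

theorem shuffleOp_list_prod {l : List (TensorAlgebra K W)} (hl : ∀ a ∈ l, IsPrimitive a) :
    shuffleOp K W l.prod = ((splits l).map fun p => p.1.prod * p.2.prod).sum := by
  simp [shuffleOp, comul_list_prod hl, map_list_sum, Function.comp_def]

end Primitive

theorem stmt2_general {K W : Type*} [CommRing K] [AddCommGroup W] [Module K W]
    (l : List (TensorAlgebra K W))
    (hl : ∀ a ∈ l, comul K W a = a ⊗ₜ 1 + 1 ⊗ₜ a) :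
    shuffleOp K W l.prod - (2 : K) ^ l.length • l.prod ∈ Filt K W (l.length - 1) := by
  set F := Filt K W (l.length - 1)
  have hterm : ∀ p ∈ splits l, F.mkQ (p.1.prod * p.2.prod) = F.mkQ l.prod := fun p hp => by
    rw [← List.prod_append]
    exact ((perm_of_mem_splits hp).symm.prod_smodEq_filt hl).symm
  rw [← SModEq.sub_mem, SModEq.def, shuffleOp_list_prod hl]
  change F.mkQ _ = F.mkQ _
  rw [map_list_sum, List.map_map, Function.comp_def, List.map_congr_left hterm, List.map_const',
    List.sum_replicate, length_splits, ← map_nsmul, ← Nat.cast_smul_eq_nsmul K]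
  norm_num

/-- for primitives g₁,…,g_p one has
`s(g₁ ⋯ g_p) ≡ 2^p · g₁ ⋯ g_p` modulo `F_{p-1}`. -/
theorem stmt2 {K W : Type*} [CommRing K] [Algebra ℚ K] [AddCommGroup W] [Module K W]
    (l : List (TensorAlgebra K W))
    (hl : ∀ a ∈ l, comul K W a = a ⊗ₜ 1 + 1 ⊗ₜ a) :
    shuffleOp K W l.prod - (2 : K) ^ l.length • l.prod ∈ Filt K W (l.length - 1) :=
  stmt2_general l hl
end

section
/- Let W be a module over a commutative ring K containing Q, and let s_n : W^{⊗n} → W^{⊗n} be the restriction of the modified shuffle operator s = μΔ to the degree-n component of the tensor algebra. Then the polynomial ν_n(X) = ∏_{i=0}^{n} (X − 2^i) annihilates s_n, i.e. ∏_{i=0}^{n} (s_n − 2^i · id) = 0. -/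
/-!
In the convolution algebra of `K`-linear endomorphisms of `T(W)` write `id = 1 + d` with
`d = id - ηε`, so that `s = id * id = (1 + d)²`. Since `T(W)` is cocommutative, `s` is a
coalgebra map, so precomposition with `s` is an algebra endomorphism of the convolution algebra;
it sends `d` to `d (d + 2)`, hence `d^j p(d) ∘ s = d^j (d + 2)^j p(d (d + 2))`, which is
`2^j d^j p(d)` modulo convolution multiples of `d^(j+1)`. Call `y` annihilated by `d^j` when all
the convolution multiples `d^j p(d)` vanish at `y`. Then `s - 2^j` maps elements annihilated by
`d^(j+1)` to elements annihilated by `d^j`, and only `0` is annihilated by `d^0`, because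
`1 + d = id`. Finally `W^{⊗n}` is annihilated by `d^(n+1)`: its elements are products of
`n` primitive elements, so their coproducts lie in `⊕_{i+j=n} W^{⊗i} ⊗ W^{⊗j}`, and `d` kills
the scalars.
-/

open scoped TensorProduct

open TensorProduct WithConv Polynomial

namespace CoalgHom
variable {R A B C : Type*} [CommSemiring R] [Semiring A] [Algebra R A]
  [AddCommMonoid B] [Module R B] [Coalgebra R B] [AddCommMonoid C] [Module R C] [Coalgebra R C]

noncomputable def convPrecomp (h : B →ₗc[R] C) :
    WithConv (C →ₗ[R] A) →ₐ[R] WithConv (B →ₗ[R] A) where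
  toFun f := toConv (f.ofConv ∘ₗ h.toLinearMap)
  map_one' := by
    rw [LinearMap.convOne_def, ofConv_toConv, LinearMap.comp_assoc, h.counit_comp]
    rfl
  map_mul' f g := congrArg toConv (LinearMap.convMul_comp_coalgHom_distrib f g h)
  map_zero' := rfl
  map_add' _ _ := rfl
  commutes' r := by
    ext x
    simp [Algebra.algebraMap_eq_smul_one, LinearMap.convOne_def]

lemma convPrecomp_apply (h : B →ₗc[R] C) (f : WithConv (C →ₗ[R] A)) (x : B) :
    (h.convPrecomp f).ofConv x = f.ofConv (h x) := rfl

end CoalgHom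

namespace Polynomial

lemma X_pow_succ_dvd_comp_X_mul_X_add_two_sub {R : Type*} [CommRing R] (j : ℕ) (p : R[X]) :
    X ^ (j + 1) ∣ (X ^ j * p).comp (X * (X + 2)) - (2 : R) ^ j • (X ^ j * p) := by
  obtain ⟨q, hq⟩ : X ∣ (X + 2) ^ j * p.comp (X * (X + 2)) - C (2 ^ j) * p := by
    simp [X_dvd_iff, coeff_zero_eq_eval_zero]
  refine ⟨q, ?_⟩
  rw [mul_comp, X_pow_comp, mul_pow, pow_succ, smul_eq_C_mul]
  linear_combination X ^ j * hq

end Polynomial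

namespace Bialgebra
variable {R H : Type*} [CommRing R] [Ring H] [Bialgebra R H]

lemma tensorTensorTensorComm_comp_map_comul_comp_comul [Coalgebra.IsCocomm R H] :
    (tensorTensorTensorComm R H H H H).toLinearMap ∘ₗ
      map (Coalgebra.comul (R := R) (A := H)) Coalgebra.comul ∘ₗ Coalgebra.comul =
    map Coalgebra.comul Coalgebra.comul ∘ₗ Coalgebra.comul (R := R) (A := H) := by
  simp only [coassoc_simps]

variable (R H)

lemma toConv_mul'_comp_comul :
    toConv (LinearMap.mul' R H ∘ₗ Coalgebra.comul) = toConv LinearMap.id ^ 2 := by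
  rw [pow_two, LinearMap.convMul_def, ofConv_toConv, TensorProduct.map_id, LinearMap.id_comp]

noncomputable def mulComulCoalgHom [Coalgebra.IsCocomm R H] : H →ₗc[R] H where
  toLinearMap := LinearMap.mul' R H ∘ₗ Coalgebra.comul
  counit_comp := by
    rw [← ofConv_toConv (LinearMap.mul' R H ∘ₗ _), toConv_mul'_comp_comul, pow_two,
      ← toLinearMap_counitAlgHom, LinearMap.algHom_comp_convMul_distrib]
    -- the counit is the unit of the convolution algebra `WithConv (H →ₗ[R] R)`
    exact congrArg ofConv (mul_one (1 : WithConv (H →ₗ[R] R)))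
  map_comp_comul := by
    rw [← LinearMap.comp_assoc, ← toLinearMap_comulAlgHom, AlgHom.comp_mul',
      LinearMap.mul'_tensor, LinearMap.comp_assoc, LinearMap.comp_assoc, toLinearMap_comulAlgHom,
      tensorTensorTensorComm_comp_map_comul_comp_comul, ← LinearMap.comp_assoc,
      ← TensorProduct.map_comp]

noncomputable def augProj : WithConv (H →ₗ[R] H) := toConv LinearMap.id - 1

/- A convolution product is not determined by the values of its factors at `y`, so the whole
family `d^j * p(d)` (with `d = augProj`) is required to vanish at `y`, not only `d^j`. -/
def AnnihilatedByAugPow (j : ℕ) (y : H) : Prop :=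
  ∀ p : R[X], (aeval (augProj R H) (X ^ j * p)).ofConv y = 0

variable {R H}

lemma convPrecomp_mulComulCoalgHom_augProj [Coalgebra.IsCocomm R H] :
    CoalgHom.convPrecomp (A := H) (mulComulCoalgHom R H) (augProj R H) =
      aeval (augProj R H) (X * (X + 2) : R[X]) := by
  have hid : toConv LinearMap.id = augProj R H + 1 := (sub_add_cancel _ _).symm
  have hs : CoalgHom.convPrecomp (A := H) (mulComulCoalgHom R H) (toConv LinearMap.id) =
      toConv LinearMap.id ^ 2 :=
    toConv_mul'_comp_comul R H
  rw [augProj, map_sub, map_one, hs, hid]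
  simp only [map_mul, map_add, aeval_X, map_ofNat]
  noncomm_ring

lemma AnnihilatedByAugPow.sub_smul [Coalgebra.IsCocomm R H] {j : ℕ} {y : H}
    (hy : AnnihilatedByAugPow R H (j + 1) y) :
    AnnihilatedByAugPow R H j (mulComulCoalgHom R H y - (2 : R) ^ j • y) := by
  intro p
  obtain ⟨q, hq⟩ := X_pow_succ_dvd_comp_X_mul_X_add_two_sub j p
  have key : (aeval (augProj R H)
      ((X ^ j * p).comp (X * (X + 2)) - (2 : R) ^ j • (X ^ j * p))).ofConv y = 0 := by
    rw [hq]
    exact hy q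
  rw [map_sub, map_smul, aeval_comp, ← convPrecomp_mulComulCoalgHom_augProj,
    aeval_algHom_apply] at key
  rwa [ofConv_sub, ofConv_smul, LinearMap.sub_apply, LinearMap.smul_apply,
    CoalgHom.convPrecomp_apply, ← map_smul, ← map_sub] at key

lemma AnnihilatedByAugPow.eq_zero {y : H} (hy : AnnihilatedByAugPow R H 0 y) : y = 0 := by
  have hunit := hy 1
  have hX := hy X
  simp only [pow_zero, one_mul, map_one, aeval_X, augProj, ofConv_sub, LinearMap.sub_apply,
    LinearMap.id_apply, LinearMap.convOne_apply] at hunit hX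
  rwa [hunit, sub_zero] at hX

theorem aeval_prod_sub_pow_two_apply_eq_zero [Coalgebra.IsCocomm R H] (j : ℕ) {y : H}
    (hy : AnnihilatedByAugPow R H j y) :
    aeval (mulComulCoalgHom R H).toLinearMap (∏ i ∈ Finset.range j, (X - C ((2 : R) ^ i))) y =
      0 := by
  induction j generalizing y with
  | zero => simpa using hy.eq_zero
  | succ j ih =>
    rw [Finset.prod_range_succ, map_mul, Module.End.mul_apply, map_sub, aeval_X, aeval_C,
      LinearMap.sub_apply, Module.algebraMap_end_apply]
    exact ih hy.sub_smul

lemma augProj_algebraMap (r : R) : (augProj R H).ofConv (algebraMap R H r) = 0 := by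
  simp [augProj]

section Primitive

variable (P : Submodule R H)

def tensorPowAntidiagonal (m : ℕ) : Submodule R (H ⊗[R] H) :=
  ⨆ (i : ℕ) (j : ℕ) (_ : i + j = m), Submodule.map₂ (TensorProduct.mk R H H) (P ^ i) (P ^ j)

lemma tmul_mem_tensorPowAntidiagonal {i j m : ℕ} (hm : i + j = m) {a b : H} (ha : a ∈ P ^ i)
    (hb : b ∈ P ^ j) : a ⊗ₜ[R] b ∈ tensorPowAntidiagonal P m :=
  Submodule.mem_iSup_of_mem i <| Submodule.mem_iSup_of_mem j <| Submodule.mem_iSup_of_mem hm <|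
    Submodule.apply_mem_map₂ _ ha hb

lemma tensorPowAntidiagonal_le_iff {m : ℕ} {N : Submodule R (H ⊗[R] H)} :
    tensorPowAntidiagonal P m ≤ N ↔
      ∀ i j, i + j = m → ∀ a ∈ P ^ i, ∀ b ∈ P ^ j, a ⊗ₜ[R] b ∈ N := by
  simp [tensorPowAntidiagonal, Submodule.map₂_le]

variable {P} (hP : ∀ p ∈ P, Coalgebra.comul (R := R) p = p ⊗ₜ[R] 1 + 1 ⊗ₜ[R] p)
include hP

lemma mul_comul_mem_tensorPowAntidiagonal {m : ℕ} {t : H ⊗[R] H}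
    (ht : t ∈ tensorPowAntidiagonal P m) {p : H} (hp : p ∈ P) :
    t * Coalgebra.comul (R := R) p ∈ tensorPowAntidiagonal P (m + 1) := by
  rw [hP p hp]
  refine (tensorPowAntidiagonal_le_iff P (N := (tensorPowAntidiagonal P (m + 1)).comap
    (LinearMap.mulRight R (p ⊗ₜ[R] 1 + 1 ⊗ₜ[R] p)))).mpr ?_ ht
  intro i j hij a ha b hb
  simp only [Submodule.mem_comap, LinearMap.mulRight_apply, mul_add,
    Algebra.TensorProduct.tmul_mul_tmul, mul_one]
  refine add_mem (tmul_mem_tensorPowAntidiagonal P (i := i + 1) (by omega) ?_ hb)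
    (tmul_mem_tensorPowAntidiagonal P (j := j + 1) (by omega) ha ?_)
  · exact pow_succ P i ▸ Submodule.mul_mem_mul ha hp
  · exact pow_succ P j ▸ Submodule.mul_mem_mul hb hp

lemma comul_mem_tensorPowAntidiagonal {m : ℕ} {x : H} (hx : x ∈ P ^ m) :
    Coalgebra.comul (R := R) x ∈ tensorPowAntidiagonal P m := by
  induction m generalizing x with
  | zero =>
    rw [pow_zero] at hx
    obtain ⟨r, rfl⟩ := Submodule.mem_one.mp hx
    have hone : (1 : H) ∈ P ^ 0 := by
      rw [pow_zero]
      exact Submodule.mem_one.mpr ⟨1, map_one _⟩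
    rw [comul_algebraMap, Algebra.algebraMap_eq_smul_one, Algebra.TensorProduct.one_def]
    exact Submodule.smul_mem _ r (tmul_mem_tensorPowAntidiagonal P (add_zero 0) hone hone)
  | succ m ih =>
    rw [pow_succ] at hx
    refine Submodule.mul_induction_on hx (fun a ha p hp => ?_) (fun y z hy hz => ?_)
    · rw [comul_mul]
      exact mul_comul_mem_tensorPowAntidiagonal hP (ih ha) hp
    · rw [map_add]
      exact add_mem hy hz

lemma augProj_pow_mul_apply_eq_zero {k m : ℕ} (hmk : m < k) (f : WithConv (H →ₗ[R] H)) {x : H}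
    (hx : x ∈ P ^ m) : (augProj R H ^ k * f).ofConv x = 0 := by
  induction k generalizing m f x with
  | zero => omega
  | succ k ih =>
    rw [pow_succ', mul_assoc, LinearMap.convMul_apply]
    refine (tensorPowAntidiagonal_le_iff P (N := LinearMap.ker
      (LinearMap.mul' R H ∘ₗ map (augProj R H).ofConv (augProj R H ^ k * f).ofConv))).mpr ?_
      (comul_mem_tensorPowAntidiagonal hP hx)
    intro i j hij a ha b hb
    simp only [LinearMap.mem_ker, LinearMap.comp_apply, map_tmul, LinearMap.mul'_apply]
    rcases Nat.eq_zero_or_pos i with rfl | hi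
    · rw [pow_zero] at ha
      obtain ⟨r, rfl⟩ := Submodule.mem_one.mp ha
      rw [augProj_algebraMap, zero_mul]
    · rw [ih (m := j) (by omega) f hb, mul_zero]

lemma annihilatedByAugPow_of_mem_pow {m : ℕ} {x : H} (hx : x ∈ P ^ m) :
    AnnihilatedByAugPow R H (m + 1) x := by
  intro p
  rw [map_mul, map_pow, aeval_X]
  exact augProj_pow_mul_apply_eq_zero hP (Nat.lt_succ_self m) _ hx

end Primitive

end Bialgebra

namespace TensorAlgebra
variable (K W : Type*) [CommRing K] [AddCommGroup W] [Module K W]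

lemma comul_ι (w : W) : comul K W (ι K w) = ι K w ⊗ₜ[K] 1 + 1 ⊗ₜ[K] ι K w := by
  simp [comul]

noncomputable instance instBialgebra : Bialgebra K (TensorAlgebra K W) :=
  .ofAlgHom (comul K W) algebraMapInv
    (by
      ext w
      simp only [AlgHom.comp_toLinearMap, AlgEquiv.toAlgHom_toLinearMap,
        Algebra.TensorProduct.assoc_toLinearEquiv, Algebra.TensorProduct.toLinearMap_map,
        AlgHom.toLinearMap_id, LinearMap.coe_comp, LinearEquiv.coe_coe, AlgHom.coe_toLinearMap,
        Function.comp_apply, comul_ι, map_add, AlgebraTensorModule.map_tmul,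
        AlgHom.toLinearMap_apply, LinearMap.id_coe, id_eq, add_tmul, map_one,
        Algebra.TensorProduct.one_def, AlgebraTensorModule.assoc_tmul, tmul_add]
      abel)
    (by ext w; simp [comul_ι, algebraMapInv])
    (by ext w; simp [comul_ι, algebraMapInv])

instance : Coalgebra.IsCocomm K (TensorAlgebra K W) where
  comm_comp_comul := by
    have h : (Algebra.TensorProduct.comm K (TensorAlgebra K W) (TensorAlgebra K W)).toAlgHom.comp
        (comul K W) = comul K W := by
      ext w
      simp only [AlgHom.comp_toLinearMap, AlgEquiv.toAlgHom_toLinearMap,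
        Algebra.TensorProduct.comm_toLinearEquiv, LinearMap.coe_comp, LinearEquiv.coe_coe,
        AlgHom.coe_toLinearMap, Function.comp_apply, comul_ι, map_add, comm_tmul]
      abel
    exact congr(($h).toLinearMap)

lemma shuffleOp_eq_mulComulCoalgHom :
    shuffleOp K W = (Bialgebra.mulComulCoalgHom K (TensorAlgebra K W)).toLinearMap :=
  rfl

end TensorAlgebra

theorem stmt3_general {K W : Type*} [CommRing K] [AddCommGroup W] [Module K W] (n : ℕ)
    (x : TensorAlgebra K W)
    (hx : x ∈ (LinearMap.range (TensorAlgebra.ι K : W →ₗ[K] TensorAlgebra K W)) ^ n) :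
    (Polynomial.aeval (shuffleOp K W : Module.End K (TensorAlgebra K W)))
      (∏ i ∈ Finset.range (n + 1), (Polynomial.X - Polynomial.C ((2 : K) ^ i))) x = 0 := by
  rw [TensorAlgebra.shuffleOp_eq_mulComulCoalgHom]
  refine Bialgebra.aeval_prod_sub_pow_two_apply_eq_zero (n + 1)
    (Bialgebra.annihilatedByAugPow_of_mem_pow ?_ hx)
  rintro _ ⟨w, rfl⟩
  exact TensorAlgebra.comul_ι K W w

/-- the polynomial `∏_{i=0}^n (X - 2^i)` annihilates `s` on the degree-`n`
component `W^{⊗n}` of the tensor algebra. -/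
theorem stmt3 {K W : Type*} [CommRing K] [Algebra ℚ K] [AddCommGroup W] [Module K W] (n : ℕ)
    (x : TensorAlgebra K W)
    (hx : x ∈ (LinearMap.range (TensorAlgebra.ι K : W →ₗ[K] TensorAlgebra K W)) ^ n) :
    (Polynomial.aeval (shuffleOp K W : Module.End K (TensorAlgebra K W)))
      (∏ i ∈ Finset.range (n + 1), (Polynomial.X - Polynomial.C ((2 : K) ^ i))) x = 0 :=
  stmt3_general n x hx
end

section
/- Let W be a module over a commutative ring K containing Q, T(W) its tensor algebra with the Hopf structure in which W is primitive, s = μΔ the modified shuffle operator, and a ∈ T(W) a primitive element (Δ(a) = a ⊗ 1 + 1 ⊗ a). Then for every b ∈ T(W), s([a,b]) = [a, s(b)], where [x,y] = xy − yx (or the graded commutator in the graded setting). -/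
/-
Since `Δ` is multiplicative and `a` is primitive, `Δ(ab - ba) = [a ⊗ 1 + 1 ⊗ a, Δb]`.
Applying `μ`, the terms with `a ⊗ 1` on the left and `1 ⊗ a` on the right give `a s(b)` and
`-s(b) a`, while the remaining two terms `μ((1 ⊗ a)Δb)` and `μ(Δb (a ⊗ 1))` coincide,
both placing `a` between the two tensor factors, and so cancel.
-/

open scoped TensorProduct

namespace LinearMap

variable {R A : Type*} [CommSemiring R] [Semiring A] [Algebra R A]

theorem mul'_tmul_one_mul (a : A) (x : A ⊗[R] A) :
    mul' R A ((a ⊗ₜ 1) * x) = a * mul' R A x := by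
  induction x using TensorProduct.induction_on with
  | zero => simp
  | tmul u v => simp [Algebra.TensorProduct.tmul_mul_tmul, mul_assoc]
  | add x y hx hy => simp only [mul_add, map_add, hx, hy]

theorem mul'_mul_one_tmul (a : A) (x : A ⊗[R] A) :
    mul' R A (x * (1 ⊗ₜ a)) = mul' R A x * a := by
  induction x using TensorProduct.induction_on with
  | zero => simp
  | tmul u v => simp [Algebra.TensorProduct.tmul_mul_tmul, mul_assoc]
  | add x y hx hy => simp only [add_mul, map_add, hx, hy]

theorem mul'_one_tmul_mul (a : A) (x : A ⊗[R] A) :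
    mul' R A ((1 ⊗ₜ a) * x) = mul' R A (x * (a ⊗ₜ 1)) := by
  induction x using TensorProduct.induction_on with
  | zero => simp
  | tmul u v => simp [Algebra.TensorProduct.tmul_mul_tmul, mul_assoc]
  | add x y hx hy => simp only [add_mul, mul_add, map_add, hx, hy]

end LinearMap

theorem stmt5_general {K W : Type*} [CommRing K] [AddCommGroup W] [Module K W]
    (a b : TensorAlgebra K W)
    (ha : comul K W a = a ⊗ₜ 1 + 1 ⊗ₜ a) :
    shuffleOp K W (a * b - b * a) = a * shuffleOp K W b - shuffleOp K W b * a := by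
  simp only [shuffleOp, LinearMap.comp_apply, AlgHom.toLinearMap_apply, map_sub, map_mul, ha,
    add_mul, mul_add, map_add, LinearMap.mul'_tmul_one_mul, LinearMap.mul'_mul_one_tmul,
    LinearMap.mul'_one_tmul_mul]
  abel

/-- if `a` is primitive then `s([a,b]) = [a, s(b)]`. -/
theorem stmt5 {K W : Type*} [CommRing K] [Algebra ℚ K] [AddCommGroup W] [Module K W]
    (a b : TensorAlgebra K W)
    (ha : comul K W a = a ⊗ₜ 1 + 1 ⊗ₜ a) :
    shuffleOp K W (a * b - b * a) = a * shuffleOp K W b - shuffleOp K W b * a :=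
  stmt5_general a b ha
end

section
/- Let W be a vector space over a field K of characteristic zero and let s = μΔ be the modified shuffle operator on T(W) (with W primitive) and s̃ := 1 ⊗ s the operator on W ⊗ T(W) = ⊕_{i≥1} W^{⊗i}. Then under the natural identifications, s ∘ (1 − z) = (1 − z) ∘ s̃ on ⊕_{i≥1} W^{⊗i}, where z acts on W^{⊗n} by the cyclic permutation; equivalently, for x ∈ W and y ∈ W^{⊗n}, s([x, y]) = [x, s(y)], where [−,−] is the commutator in T(W). -/
open scoped TensorProduct

/- Since `x` is primitive, `Δ [x, y] = [x ⊗ 1 + 1 ⊗ x, Δ y]`; on a pure tensor `b ⊗ c` the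
multiplication map sends this commutator to `xbc + bxc - bxc - bcx = [x, bc]`, the two middle
terms cancelling. -/
theorem LinearMap.mul'_commutator_primitive {K A : Type*} [CommRing K] [Ring A] [Algebra K A]
    (a : A) (t : A ⊗[K] A) :
    LinearMap.mul' K A ((a ⊗ₜ 1 + 1 ⊗ₜ a) * t - t * (a ⊗ₜ 1 + 1 ⊗ₜ a)) =
      a * LinearMap.mul' K A t - LinearMap.mul' K A t * a := by
  induction t using TensorProduct.induction_on with
  | zero => simp
  | tmul b c =>
    simp only [add_mul, mul_add, Algebra.TensorProduct.tmul_mul_tmul, one_mul, mul_one,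
      map_sub, map_add, LinearMap.mul'_apply, mul_assoc]
    abel
  | add u v hu hv =>
    rw [mul_add _ u v, add_mul u v, add_sub_add_comm, map_add, hu, hv, map_add]
    noncomm_ring

theorem comul_ι {K W : Type*} [CommRing K] [AddCommGroup W] [Module K W] (x : W) :
    comul K W (TensorAlgebra.ι K x) =
      TensorAlgebra.ι K x ⊗ₜ[K] 1 + (1 : TensorAlgebra K W) ⊗ₜ[K] TensorAlgebra.ι K x :=
  TensorAlgebra.lift_ι_apply _ x

theorem shuffleOp_commutator_ι {K W : Type*} [CommRing K] [AddCommGroup W] [Module K W]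
    (x : W) (y : TensorAlgebra K W) :
    shuffleOp K W (TensorAlgebra.ι K x * y - y * TensorAlgebra.ι K x)
      = TensorAlgebra.ι K x * shuffleOp K W y - shuffleOp K W y * TensorAlgebra.ι K x := by
  simp only [shuffleOp, LinearMap.comp_apply, AlgHom.toLinearMap_apply, map_sub, map_mul,
    comul_ι]
  rw [← map_sub]
  exact LinearMap.mul'_commutator_primitive _ _

theorem stmt15_general {K W : Type*} [Field K] [AddCommGroup W] [Module K W]
    (x : W) (y : TensorAlgebra K W) :
    shuffleOp K W (TensorAlgebra.ι K x * y - y * TensorAlgebra.ι K x)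
      = TensorAlgebra.ι K x * shuffleOp K W y - shuffleOp K W y * TensorAlgebra.ι K x :=
  shuffleOp_commutator_ι x y

/-- for `x ∈ W` and `y ∈ W^{⊗n}`, `s([x,y]) = [x, s(y)]`;
equivalently `s ∘ (1 - z) = (1 - z) ∘ s̃`. -/
theorem stmt15 {K W : Type*} [Field K] [CharZero K] [AddCommGroup W] [Module K W]
    (n : ℕ) (x : W) (y : TensorAlgebra K W)
    (hy : y ∈ (LinearMap.range (TensorAlgebra.ι K : W →ₗ[K] TensorAlgebra K W)) ^ n) :
    shuffleOp K W (TensorAlgebra.ι K x * y - y * TensorAlgebra.ι K x)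
      = TensorAlgebra.ι K x * shuffleOp K W y - shuffleOp K W y * TensorAlgebra.ι K x :=
  stmt15_general x y
end

section
/- Let K be a field of characteristic zero and W a finite-dimensional K-vector space. The free Lie algebra functor commutes with taking homology: if (W, d) is a complex of K-vector spaces (d² = 0, d a differential on W), and d is extended to the free Lie algebra L(W) as a Lie derivation, then the natural map L(H(W,d)) → H(L(W), d) is an isomorphism of Lie algebras. -/
/-- The parity automorphism of the tensor algebra induced by a parity operator `ε` on `W`
(the operator acting by `+1` on the even part and `-1` on the odd part of a graded
module). -/
noncomputable def parityT {K W : Type*} [Field K] [AddCommGroup W] [Module K W]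
    (ε : W →ₗ[K] W) : TensorAlgebra K W →ₐ[K] TensorAlgebra K W :=
  TensorAlgebra.lift K ((TensorAlgebra.ι K) ∘ₗ ε)

/-- The free graded Lie algebra on a graded module `W` (with grading encoded by the parity
operator `ε`), realized inside the tensor algebra as the smallest subspace containing `W`
and closed under the graded commutator `[a,b] = ab - (-1)^{|a||b|}ba`; here
`(-1)^{|a||b|} ba = ba - ½(b - εb)(a - εa)` bilinearly. -/
noncomputable def gradedFreeLie (K : Type*) {W : Type*} [Field K] [AddCommGroup W]
    [Module K W] (ε : W →ₗ[K] W) : Submodule K (TensorAlgebra K W) :=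
  sInf {p : Submodule K (TensorAlgebra K W) |
    Set.range (TensorAlgebra.ι K : W →ₗ[K] TensorAlgebra K W) ⊆ ↑p ∧
    ∀ a ∈ p, ∀ b ∈ p,
      a * b - b * a + (2 : K)⁻¹ • ((b - parityT ε b) * (a - parityT ε a)) ∈ p}

/-- The homology `ker d / im d` of a differential `d` on `W`. -/
abbrev Homology {K W : Type*} [Field K] [AddCommGroup W] [Module K W] (d : W →ₗ[K] W) :
    Type _ :=
  ↥(LinearMap.ker d) ⧸ (LinearMap.range d).comap (LinearMap.ker d).subtype

/-!
Choose, compatibly with the parities, a strong deformation retraction of `(W, d)` onto its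
homology: `i = σ`, `r : W → H(W)` and an odd homotopy `h` with `dh + hd = 1 - ir`. Extend `d`
and `h` to odd derivations `D`, `H` of `T(W)`. Their graded commutator `N = DH + HD` is an
ordinary derivation with `N (ι w) = ι (w - i r w)`, so it acts diagonalizably with
eigenvalue `k` on words with `k` letters in `ker r`, and `L(W)` splits along its eigenspaces.
The `0`-eigenspace is the image of `T(H)`, on which `T(i) ∘ T(r)` is the identity, while
on the `μ`-eigenspace with `μ ≠ 0` every `D`-cycle `g` is the boundary of `μ⁻¹ H g` (this is
where characteristic zero enters). Hence every cycle of `L(W)` is homologous to its image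
under `T(i) ∘ T(r)`, which comes from `L(H)`; injectivity follows from `T(r) ∘ T(i) = 1` and
`T(r) ∘ D = 0`.
-/

section Eigenspace

open Module.End

variable {K : Type*} [Field K]

theorem mem_iSup_inf_eigenspace_inf_ker {V : Type*} [AddCommGroup V] [Module K V]
    {N D : Module.End K V} (hDN : ∀ x, D (N x) = N (D x)) {L : Submodule K V} {z : V}
    (hz : z ∈ ⨆ μ, L ⊓ N.eigenspace μ) (hDz : D z = 0) :
    z ∈ ⨆ μ, L ⊓ N.eigenspace μ ⊓ LinearMap.ker D := by
  obtain ⟨g, hg, rfl⟩ := (Submodule.mem_iSup_iff_exists_finsupp _ _).1 hz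
  have hD : ∀ μ ∈ g.support, D (g μ) = 0 :=
    (iSupIndep_iff_finsetSum_eq_zero_imp_eq_zero _).1 N.eigenspaces_iSupIndep g.support
      (fun μ => D (g μ))
      (fun μ _ => by
        rw [mem_eigenspace_iff, ← hDN, mem_eigenspace_iff.1 (hg μ).2, map_smul])
      (by simpa [Finsupp.sum] using hDz)
  refine (Submodule.mem_iSup_iff_exists_finsupp _ _).2 ⟨g, fun μ => ⟨hg μ, ?_⟩, rfl⟩
  by_cases hμ : μ ∈ g.support
  · exact hD μ hμ
  · simp [Finsupp.notMem_support_iff.1 hμ]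

variable {A : Type*} [Ring A] [Algebra K A] {N : Module.End K A}

theorem mul_mem_eigenspace_add (hN : ∀ a b, N (a * b) = N a * b + a * N b) {μ ν : K}
    {x y : A} (hx : x ∈ N.eigenspace μ) (hy : y ∈ N.eigenspace ν) :
    x * y ∈ N.eigenspace (μ + ν) := by
  rw [mem_eigenspace_iff] at *
  rw [hN, hx, hy, smul_mul_assoc, mul_smul_comm, add_smul]

theorem mul_mem_iSup_eigenspace_succ (hN : ∀ a b, N (a * b) = N a * b + a * N b) {x y : A}
    (hx : x ∈ ⨆ k : ℕ, N.eigenspace (k + 1)) (hy : y ∈ ⨆ k : ℕ, N.eigenspace k) :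
    x * y ∈ ⨆ k : ℕ, N.eigenspace (k + 1) ∧ y * x ∈ ⨆ k : ℕ, N.eigenspace (k + 1) := by
  have key : ∀ i j : ℕ, ∀ a ∈ N.eigenspace (i + 1), ∀ b ∈ N.eigenspace j,
      a * b ∈ ⨆ k : ℕ, N.eigenspace (k + 1) ∧ b * a ∈ ⨆ k : ℕ, N.eigenspace (k + 1) := by
    intro i j a ha b hb
    have hij : ((i + j : ℕ) : K) + 1 = i + 1 + j := by push_cast; ring
    refine ⟨Submodule.mem_iSup_of_mem (i + j) ?_, Submodule.mem_iSup_of_mem (i + j) ?_⟩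
    · rw [hij]; exact mul_mem_eigenspace_add hN ha hb
    · rw [hij, add_comm _ (j : K)]; exact mul_mem_eigenspace_add hN hb ha
  induction hx using Submodule.iSup_induction' with
  | mem i a ha =>
    induction hy using Submodule.iSup_induction' with
    | mem j b hb => exact key i j a ha b hb
    | zero => simp
    | add b b' _ _ hb hb' =>
      simpa [mul_add, add_mul] using ⟨add_mem hb.1 hb'.1, add_mem hb.2 hb'.2⟩
  | zero => simp
  | add a a' _ _ ha ha' =>
    simpa [mul_add, add_mul] using ⟨add_mem ha.1 ha'.1, add_mem ha.2 ha'.2⟩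

end Eigenspace

namespace GradedFreeLie

open TensorAlgebra Module.End

variable {K W W' W'' : Type*} [Field K] [AddCommGroup W] [Module K W] [AddCommGroup W']
  [Module K W'] [AddCommGroup W''] [Module K W'']

noncomputable def tensorMap (f : W →ₗ[K] W') : TensorAlgebra K W →ₐ[K] TensorAlgebra K W' :=
  lift K (ι K ∘ₗ f)

@[simp] theorem tensorMap_ι (f : W →ₗ[K] W') (w : W) : tensorMap f (ι K w) = ι K (f w) :=
  lift_ι_apply _ _

theorem tensorMap_comp_tensorMap (g : W' →ₗ[K] W'') (f : W →ₗ[K] W') :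
    (tensorMap g).comp (tensorMap f) = tensorMap (g ∘ₗ f) := by
  ext; simp

theorem tensorMap_id : tensorMap (LinearMap.id : W →ₗ[K] W) = AlgHom.id K _ := by
  ext; simp

theorem tensorMap_tensorMap {g : W' →ₗ[K] W} {f : W →ₗ[K] W'} (hgf : g ∘ₗ f = LinearMap.id)
    (x : TensorAlgebra K W) : tensorMap g (tensorMap f x) = x := by
  rw [← AlgHom.comp_apply, tensorMap_comp_tensorMap, hgf, tensorMap_id, AlgHom.id_apply]

theorem parityT_eq_tensorMap (ε : W →ₗ[K] W) : parityT ε = tensorMap ε := rfl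

theorem parityT_parityT {ε : W →ₗ[K] W} (hε : ε ∘ₗ ε = LinearMap.id) (x : TensorAlgebra K W) :
    parityT ε (parityT ε x) = x :=
  tensorMap_tensorMap hε x

theorem tensorMap_parityT {ε : W →ₗ[K] W} {ε' : W' →ₗ[K] W'} {f : W →ₗ[K] W'}
    (hf : f ∘ₗ ε = ε' ∘ₗ f) (x : TensorAlgebra K W) :
    tensorMap f (parityT ε x) = parityT ε' (tensorMap f x) := by
  simp only [parityT_eq_tensorMap, ← AlgHom.comp_apply, tensorMap_comp_tensorMap, hf]

noncomputable def bracket (ε : W →ₗ[K] W) :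
    TensorAlgebra K W →ₗ[K] TensorAlgebra K W →ₗ[K] TensorAlgebra K W :=
  LinearMap.mul K _ - (LinearMap.mul K _).flip +
    (2 : K)⁻¹ • ((LinearMap.mul K _).compl₁₂ (1 - (parityT ε).toLinearMap)
      (1 - (parityT ε).toLinearMap)).flip

theorem bracket_apply (ε : W →ₗ[K] W) (a b : TensorAlgebra K W) :
    bracket ε a b = a * b - b * a + (2 : K)⁻¹ • ((b - parityT ε b) * (a - parityT ε a)) := by
  simp [bracket, sub_mul]

theorem gradedFreeLie_le {ε : W →ₗ[K] W} {M : Submodule K (TensorAlgebra K W)}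
    (hι : ∀ w, ι K w ∈ M) (hbr : ∀ a ∈ M, ∀ b ∈ M, bracket ε a b ∈ M) :
    gradedFreeLie K ε ≤ M :=
  sInf_le ⟨by rintro _ ⟨w, rfl⟩; exact hι w, fun a ha b hb => by
    simpa [bracket_apply] using hbr a ha b hb⟩

theorem ι_mem_gradedFreeLie (ε : W →ₗ[K] W) (w : W) : ι K w ∈ gradedFreeLie K ε :=
  Submodule.mem_sInf.2 fun _ hp => hp.1 ⟨w, rfl⟩

theorem bracket_mem_gradedFreeLie {ε : W →ₗ[K] W} {a b : TensorAlgebra K W}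
    (ha : a ∈ gradedFreeLie K ε) (hb : b ∈ gradedFreeLie K ε) :
    bracket ε a b ∈ gradedFreeLie K ε := by
  rw [bracket_apply]
  exact Submodule.mem_sInf.2 fun p hp =>
    hp.2 a (Submodule.mem_sInf.1 ha p hp) b (Submodule.mem_sInf.1 hb p hp)

theorem tensorMap_bracket {ε : W →ₗ[K] W} {ε' : W' →ₗ[K] W'} {f : W →ₗ[K] W'}
    (hf : f ∘ₗ ε = ε' ∘ₗ f) (a b : TensorAlgebra K W) :
    tensorMap f (bracket ε a b) = bracket ε' (tensorMap f a) (tensorMap f b) := by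
  simp [bracket_apply, tensorMap_parityT hf]

theorem tensorMap_mem_gradedFreeLie {ε : W →ₗ[K] W} {ε' : W' →ₗ[K] W'} {f : W →ₗ[K] W'}
    (hf : f ∘ₗ ε = ε' ∘ₗ f) {x : TensorAlgebra K W} (hx : x ∈ gradedFreeLie K ε) :
    tensorMap f x ∈ gradedFreeLie K ε' := by
  refine gradedFreeLie_le (M := (gradedFreeLie K ε').comap (tensorMap f).toLinearMap)
    (fun w => ?_) (fun a ha b hb => ?_) hx
  · simpa using ι_mem_gradedFreeLie ε' (f w)
  · simpa [tensorMap_bracket hf] using bracket_mem_gradedFreeLie ha hb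

section OddDerivation

variable {ε f : W →ₗ[K] W}

/-- Lower triangular matrices multiply as `!![a, 0; x, a'] * !![b, 0; y, b'] =
!![a * b, 0; x * b + a' * y, a' * b']`, so the lower left entry of this algebra map is a
derivation twisted by `parityT ε`. -/
noncomputable def oddDerivationMatrix (ε f : W →ₗ[K] W) :
    TensorAlgebra K W →ₐ[K] Matrix (Fin 2) (Fin 2) (TensorAlgebra K W) :=
  lift K
    { toFun w := !![ι K w, 0; ι K (f w), ι K (ε w)]
      map_add' x y := by ext i j; fin_cases i <;> fin_cases j <;> simp
      map_smul' c x := by ext i j; fin_cases i <;> fin_cases j <;> simp }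

noncomputable def oddDerivation (ε f : W →ₗ[K] W) :
    TensorAlgebra K W →ₗ[K] TensorAlgebra K W :=
  Matrix.entryLinearMap K (TensorAlgebra K W) 1 0 ∘ₗ (oddDerivationMatrix ε f).toLinearMap

theorem oddDerivation_apply (x : TensorAlgebra K W) :
    oddDerivation ε f x = oddDerivationMatrix ε f x 1 0 := rfl

theorem oddDerivationMatrix_apply (x : TensorAlgebra K W) :
    oddDerivationMatrix ε f x = !![x, 0; oddDerivation ε f x, parityT ε x] := by
  induction x using TensorAlgebra.induction with
  | algebraMap r =>
    ext i j; fin_cases i <;> fin_cases j <;> simp [oddDerivation, Matrix.algebraMap_matrix_apply]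
  | ι w =>
    ext i j; fin_cases i <;> fin_cases j <;> simp [oddDerivation, oddDerivationMatrix, parityT]
  | mul a b ha hb =>
    rw [oddDerivation_apply, map_mul, ha, hb]
    ext i j; fin_cases i <;> fin_cases j <;> simp [Matrix.mul_apply]
  | add a b ha hb =>
    rw [oddDerivation_apply, map_add, ha, hb]
    ext i j; fin_cases i <;> fin_cases j <;> simp

@[simp] theorem oddDerivation_ι (w : W) : oddDerivation ε f (ι K w) = ι K (f w) := by
  simp [oddDerivation, oddDerivationMatrix]

theorem oddDerivation_mul (a b : TensorAlgebra K W) :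
    oddDerivation ε f (a * b) = oddDerivation ε f a * b + parityT ε a * oddDerivation ε f b := by
  have := congr_fun₂ (map_mul (oddDerivationMatrix ε f) a b) 1 0
  simpa [oddDerivationMatrix_apply, Matrix.mul_apply] using this

@[simp] theorem oddDerivation_algebraMap (r : K) :
    oddDerivation ε f (algebraMap K (TensorAlgebra K W) r) = 0 := by
  simp [oddDerivation, Matrix.algebraMap_matrix_apply]

theorem eq_oddDerivation {X : TensorAlgebra K W →ₗ[K] TensorAlgebra K W}
    (hι : X ∘ₗ ι K = ι K ∘ₗ f) (hmul : ∀ a b, X (a * b) = X a * b + parityT ε a * X b) :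
    X = oddDerivation ε f := by
  have h1 : X 1 = 0 := by simpa using hmul 1 1
  ext x
  induction x using TensorAlgebra.induction with
  | algebraMap r =>
    rw [oddDerivation_algebraMap, Algebra.algebraMap_eq_smul_one, map_smul, h1, smul_zero]
  | ι w => simpa using LinearMap.congr_fun hι w
  | mul a b ha hb => rw [hmul, oddDerivation_mul, ha, hb]
  | add a b ha hb => rw [map_add, map_add, ha, hb]

theorem tensorMap_oddDerivation {g : W →ₗ[K] W'} (hgf : g ∘ₗ f = 0) (x : TensorAlgebra K W) :
    tensorMap g (oddDerivation ε f x) = 0 := by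
  induction x using TensorAlgebra.induction with
  | algebraMap r => simp
  | ι w => simpa using congr_arg (ι K) (LinearMap.congr_fun hgf w)
  | mul a b ha hb => simp [oddDerivation_mul, ha, hb]
  | add a b ha hb => simp [ha, hb]

theorem oddDerivation_tensorMap {g : W' →ₗ[K] W} (hfg : f ∘ₗ g = 0) (x : TensorAlgebra K W') :
    oddDerivation ε f (tensorMap g x) = 0 := by
  induction x using TensorAlgebra.induction with
  | algebraMap r => simp
  | ι w => simpa using congr_arg (ι K) (LinearMap.congr_fun hfg w)
  | mul a b ha hb => simp [oddDerivation_mul, ha, hb]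
  | add a b ha hb => simp [ha, hb]

variable (hε : ε ∘ₗ ε = LinearMap.id) (hf : f ∘ₗ ε = -(ε ∘ₗ f))
include hε hf

theorem oddDerivation_parityT (x : TensorAlgebra K W) :
    oddDerivation ε f (parityT ε x) = -parityT ε (oddDerivation ε f x) := by
  induction x using TensorAlgebra.induction with
  | algebraMap r => simp
  | ι w => simpa [parityT] using congr_arg (ι K) (LinearMap.congr_fun hf w)
  | mul a b ha hb =>
    simp only [map_mul, oddDerivation_mul, ha, hb, parityT_parityT hε, map_add]
    noncomm_ring
  | add a b ha hb => rw [map_add, map_add, ha, hb, map_add, map_add, neg_add]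

theorem oddDerivation_oddDerivation (hff : f ∘ₗ f = 0) (x : TensorAlgebra K W) :
    oddDerivation ε f (oddDerivation ε f x) = 0 := by
  induction x using TensorAlgebra.induction with
  | algebraMap r => simp
  | ι w => simpa using congr_arg (ι K) (LinearMap.congr_fun hff w)
  | mul a b ha hb =>
    simp only [oddDerivation_mul, map_add, ha, hb, oddDerivation_parityT hε hf]
    noncomm_ring
  | add a b ha hb => simp [ha, hb]

theorem oddDerivation_bracket [NeZero (2 : K)] (a b : TensorAlgebra K W) :
    oddDerivation ε f (bracket ε a b) =
      bracket ε (oddDerivation ε f a) b + bracket ε (parityT ε a) (oddDerivation ε f b) := by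
  simp only [bracket_apply, map_add, map_sub, map_smul, oddDerivation_mul,
    oddDerivation_parityT hε hf, parityT_parityT hε, mul_sub, sub_mul, smul_sub, smul_add,
    mul_neg, neg_mul]
  match_scalars <;> field_simp <;> ring

theorem oddDerivation_mem_gradedFreeLie [NeZero (2 : K)] {x : TensorAlgebra K W}
    (hx : x ∈ gradedFreeLie K ε) : oddDerivation ε f x ∈ gradedFreeLie K ε := by
  refine (gradedFreeLie_le (M := gradedFreeLie K ε ⊓
      (gradedFreeLie K ε).comap (oddDerivation ε f)) (fun w => ?_) ?_ hx).2
  · exact ⟨ι_mem_gradedFreeLie ε w, by simpa using ι_mem_gradedFreeLie ε (f w)⟩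
  · rintro a ⟨ha, hXa⟩ b ⟨hb, hXb⟩
    refine ⟨bracket_mem_gradedFreeLie ha hb, ?_⟩
    show oddDerivation ε f (bracket ε a b) ∈ gradedFreeLie K ε
    rw [oddDerivation_bracket hε hf]
    exact add_mem (bracket_mem_gradedFreeLie hXa hb) (bracket_mem_gradedFreeLie
      (tensorMap_mem_gradedFreeLie (f := ε) rfl ha) hXb)

end OddDerivation

section Laplacian

variable {ε d h : W →ₗ[K] W}

noncomputable def laplacian (ε d h : W →ₗ[K] W) : Module.End K (TensorAlgebra K W) :=
  oddDerivation ε d ∘ₗ oddDerivation ε h + oddDerivation ε h ∘ₗ oddDerivation ε d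

theorem laplacian_apply (x : TensorAlgebra K W) :
    laplacian ε d h x =
      oddDerivation ε d (oddDerivation ε h x) + oddDerivation ε h (oddDerivation ε d x) :=
  rfl

theorem laplacian_ι (w : W) : laplacian ε d h (ι K w) = ι K (d (h w) + h (d w)) := by
  simp [laplacian_apply]

theorem oddDerivation_laplacian (hε : ε ∘ₗ ε = LinearMap.id) (hd : d ∘ₗ ε = -(ε ∘ₗ d))
    (hdd : d ∘ₗ d = 0) (x : TensorAlgebra K W) :
    oddDerivation ε d (laplacian ε d h x) = laplacian ε d h (oddDerivation ε d x) := by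
  simp [laplacian_apply, oddDerivation_oddDerivation hε hd hdd]

variable (hε : ε ∘ₗ ε = LinearMap.id) (hd : d ∘ₗ ε = -(ε ∘ₗ d)) (hh : h ∘ₗ ε = -(ε ∘ₗ h))
include hε hd hh

theorem laplacian_mul (a b : TensorAlgebra K W) :
    laplacian ε d h (a * b) = laplacian ε d h a * b + a * laplacian ε d h b := by
  simp only [laplacian_apply, oddDerivation_mul, map_add, oddDerivation_parityT hε hd,
    oddDerivation_parityT hε hh, parityT_parityT hε]
  noncomm_ring

theorem laplacian_parityT (x : TensorAlgebra K W) :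
    laplacian ε d h (parityT ε x) = parityT ε (laplacian ε d h x) := by
  simp [laplacian_apply, oddDerivation_parityT hε hd, oddDerivation_parityT hε hh]

end Laplacian

section Eigenspace

variable {N : Module.End K (TensorAlgebra K W)}

theorem sub_mem_iSup_eigenspace_succ (hN : ∀ a b, N (a * b) = N a * b + a * N b)
    {q : TensorAlgebra K W →ₐ[K] TensorAlgebra K W} (hNq : ∀ x, N (q x) = 0)
    (hι : ∀ w, ι K w - q (ι K w) ∈ N.eigenspace 1) (x : TensorAlgebra K W) :
    x - q x ∈ ⨆ k : ℕ, N.eigenspace (k + 1) := by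
  have hq0 : ∀ y, q y ∈ ⨆ k : ℕ, N.eigenspace k := fun y =>
    Submodule.mem_iSup_of_mem 0 (by simpa [mem_eigenspace_iff] using hNq y)
  have hpos : ⨆ k : ℕ, N.eigenspace (k + 1) ≤ ⨆ k : ℕ, N.eigenspace k :=
    iSup_le fun k => le_iSup_of_le (k + 1) (by push_cast; rfl)
  induction x using TensorAlgebra.induction with
  | algebraMap r => simp
  | ι w => exact Submodule.mem_iSup_of_mem 0 (by simpa using hι w)
  | mul a b ha hb =>
    have hb' : b ∈ ⨆ k : ℕ, N.eigenspace k := by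
      simpa using add_mem (hq0 b) (hpos hb)
    have key : a * b - q (a * b) = (a - q a) * b + q a * (b - q b) := by
      rw [map_mul]; noncomm_ring
    rw [key]
    exact add_mem (mul_mem_iSup_eigenspace_succ hN ha hb').1
      (mul_mem_iSup_eigenspace_succ hN hb (hq0 a)).2
  | add a b ha hb => simpa [add_sub_add_comm] using add_mem ha hb

theorem apply_eq_self_of_mem_eigenspace_zero [CharZero K]
    (hN : ∀ a b, N (a * b) = N a * b + a * N b)
    {q : TensorAlgebra K W →ₐ[K] TensorAlgebra K W} (hNq : ∀ x, N (q x) = 0)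
    (hι : ∀ w, ι K w - q (ι K w) ∈ N.eigenspace 1) {x : TensorAlgebra K W}
    (hx : x ∈ N.eigenspace 0) : q x = x := by
  have hpos : ⨆ k : ℕ, N.eigenspace (k + 1) ≤ ⨆ (μ : K) (_ : μ ≠ 0), N.eigenspace μ :=
    iSup_le fun k => le_iSup₂_of_le ((k : K) + 1) (by exact_mod_cast k.succ_ne_zero) le_rfl
  have h0 : x - q x ∈ N.eigenspace 0 := by
    refine sub_mem hx ?_
    simpa [mem_eigenspace_iff] using hNq x
  have := (N.eigenspaces_iSupIndep 0).le_bot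
    ⟨h0, hpos (sub_mem_iSup_eigenspace_succ hN hNq hι x)⟩
  exact (sub_eq_zero.1 this).symm

theorem bracket_mem_eigenspace_add {ε : W →ₗ[K] W} (hN : ∀ a b, N (a * b) = N a * b + a * N b)
    (hNε : ∀ x, N (parityT ε x) = parityT ε (N x)) {μ ν : K} {x y : TensorAlgebra K W}
    (hx : x ∈ N.eigenspace μ) (hy : y ∈ N.eigenspace ν) :
    bracket ε x y ∈ N.eigenspace (μ + ν) := by
  have hP : ∀ {μ} {z}, z ∈ N.eigenspace μ → parityT ε z ∈ N.eigenspace μ := fun hz => by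
    rw [mem_eigenspace_iff] at *
    rw [hNε, hz, map_smul]
  rw [bracket_apply, add_comm μ ν]
  refine add_mem (sub_mem ?_ (mul_mem_eigenspace_add hN hy hx)) (Submodule.smul_mem _ _ ?_)
  · rw [add_comm]; exact mul_mem_eigenspace_add hN hx hy
  · exact mul_mem_eigenspace_add hN (sub_mem hy (hP hy)) (sub_mem hx (hP hx))

theorem gradedFreeLie_le_iSup_eigenspace {ε : W →ₗ[K] W}
    (hN : ∀ a b, N (a * b) = N a * b + a * N b)
    (hNε : ∀ x, N (parityT ε x) = parityT ε (N x))
    (hι : ∀ w, ι K w ∈ ⨆ μ, gradedFreeLie K ε ⊓ N.eigenspace μ) :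
    gradedFreeLie K ε ≤ ⨆ μ, gradedFreeLie K ε ⊓ N.eigenspace μ := by
  refine gradedFreeLie_le hι fun a ha b hb => Submodule.map₂_le.1 ?_ a ha b hb
  rw [Submodule.map₂_iSup_left]
  refine iSup_le fun μ => ?_
  rw [Submodule.map₂_iSup_right]
  refine iSup_le fun ν => Submodule.map₂_le.2 fun x hx y hy => ?_
  exact Submodule.mem_iSup_of_mem (μ + ν) ⟨bracket_mem_gradedFreeLie hx.1 hy.1,
    bracket_mem_eigenspace_add hN hNε hx.2 hy.2⟩

end Eigenspace

section DeformationRetract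

variable {ε d : W →ₗ[K] W}

/-- Strong deformation retract data from the complex `(W, d)` onto `W'` with zero
differential, whose homotopy `h` is odd for the parity `ε`. -/
structure IsOddDeformationRetract (ε d : W →ₗ[K] W) (i : W' →ₗ[K] W) (r : W →ₗ[K] W')
    (h : W →ₗ[K] W) : Prop where
  r_comp_i : r ∘ₗ i = LinearMap.id
  d_comp_i : d ∘ₗ i = 0
  r_comp_d : r ∘ₗ d = 0
  homotopy : d ∘ₗ h + h ∘ₗ d = LinearMap.id - i ∘ₗ r
  h_comp_i : h ∘ₗ i = 0
  r_comp_h : r ∘ₗ h = 0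
  h_comp_ε : h ∘ₗ ε = -(ε ∘ₗ h)

section Averaging

variable [NeZero (2 : K)] (hε : ε ∘ₗ ε = LinearMap.id) (hd : d ∘ₗ ε = -(ε ∘ₗ d))
include hε hd

theorem exists_retraction_ker_comm :
    ∃ e : W →ₗ[K] W, d ∘ₗ e = 0 ∧ (∀ w ∈ LinearMap.ker d, e w = w) ∧ e ∘ₗ ε = ε ∘ₗ e := by
  have hεε : ∀ w, ε (ε w) = w := LinearMap.congr_fun hε
  have hdε : ∀ w, d (ε w) = -ε (d w) := LinearMap.congr_fun hd
  obtain ⟨g, hg⟩ := LinearMap.exists_leftInverse_of_injective (LinearMap.ker d).subtype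
    (LinearMap.ker_eq_bot.2 Subtype.val_injective)
  set e₀ := (LinearMap.ker d).subtype ∘ₗ g
  have hde₀ : ∀ w, d (e₀ w) = 0 := fun w => (g w).2
  have he₀ : ∀ w ∈ LinearMap.ker d, e₀ w = w := fun w hw =>
    congr_arg Subtype.val (LinearMap.congr_fun hg ⟨w, hw⟩)
  refine ⟨(2 : K)⁻¹ • (e₀ + ε ∘ₗ e₀ ∘ₗ ε), ?_, fun w hw => ?_, ?_⟩
  · ext w; simp [hdε, hde₀]
  · have hεw : ε w ∈ LinearMap.ker d := by simp [hdε, LinearMap.mem_ker.1 hw]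
    simp only [LinearMap.smul_apply, LinearMap.add_apply, LinearMap.comp_apply, he₀ w hw,
      he₀ _ hεw, hεε, ← two_smul K w, smul_smul]
    rw [inv_mul_cancel₀ two_ne_zero, one_smul]
  · ext w; simp [hεε, add_comm]

theorem exists_generalizedInverse_anticomm :
    ∃ s : W →ₗ[K] W, d ∘ₗ s ∘ₗ d = d ∧ s ∘ₗ ε = -(ε ∘ₗ s) := by
  have hεε : ∀ w, ε (ε w) = w := LinearMap.congr_fun hε
  have hdε : ∀ w, d (ε w) = -ε (d w) := LinearMap.congr_fun hd
  obtain ⟨t, ht⟩ := d.rangeRestrict.exists_rightInverse_of_surjective d.range_rangeRestrict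
  obtain ⟨g, hg⟩ := LinearMap.exists_leftInverse_of_injective (LinearMap.range d).subtype
    (LinearMap.ker_eq_bot.2 Subtype.val_injective)
  set s₀ := t ∘ₗ g
  have hs₀ : ∀ w, d (s₀ (d w)) = d w := fun w => by
    have h1 : g (d w) = ⟨d w, LinearMap.mem_range_self d w⟩ :=
      LinearMap.congr_fun hg ⟨d w, LinearMap.mem_range_self d w⟩
    simpa [s₀, h1] using congr_arg Subtype.val (LinearMap.congr_fun ht ⟨d w, _⟩)
  refine ⟨(2 : K)⁻¹ • (s₀ - ε ∘ₗ s₀ ∘ₗ ε), ?_, ?_⟩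
  · ext w
    have h2 : d (s₀ (ε (d w))) = ε (d w) := by
      simpa [hdε] using congr_arg Neg.neg (hs₀ (ε w))
    simp only [LinearMap.comp_apply, LinearMap.smul_apply, LinearMap.sub_apply, map_smul,
      map_sub, hs₀, hdε, h2, hεε, sub_neg_eq_add, ← two_smul K (d w), smul_smul]
    rw [inv_mul_cancel₀ two_ne_zero, one_smul]
  · ext w; simp [hεε]; module

end Averaging

theorem isOddDeformationRetract_of_retraction {i : W' →ₗ[K] W} {r : W →ₗ[K] W'}
    {e s : W →ₗ[K] W} (hdd : d ∘ₗ d = 0) (hde : d ∘ₗ e = 0)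
    (he : ∀ w ∈ LinearMap.ker d, e w = w) (hsd : d ∘ₗ s ∘ₗ d = d)
    (hri : r ∘ₗ i = LinearMap.id) (hdi : d ∘ₗ i = 0) (hrd : r ∘ₗ d = 0) (hre : r ∘ₗ e = r)
    (hrange : ∀ w, e w - i (r w) ∈ LinearMap.range d) (heε : e ∘ₗ ε = ε ∘ₗ e)
    (hsε : s ∘ₗ ε = -(ε ∘ₗ s)) (hirε : i ∘ₗ r ∘ₗ ε = ε ∘ₗ i ∘ₗ r) :
    IsOddDeformationRetract ε d i r ((LinearMap.id - e) ∘ₗ s ∘ₗ (e - i ∘ₗ r)) := by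
  have hde' : ∀ w, d (e w) = 0 := LinearMap.congr_fun hde
  have hsd' : ∀ w, d (s (d w)) = d w := LinearMap.congr_fun hsd
  have hei : ∀ x, e (i x) = i x := fun x => he _ (LinearMap.congr_fun hdi x)
  have hri' : ∀ x, r (i x) = x := LinearMap.congr_fun hri
  have hed : ∀ w, e (d w) = d w := fun w => he _ (LinearMap.congr_fun hdd w)
  have hrd' : ∀ w, r (d w) = 0 := LinearMap.congr_fun hrd
  have hre' : ∀ w, r (e w) = r w := LinearMap.congr_fun hre
  -- `w - e w - s (d w) + e (s (d w))` is a cycle killed by `e`, hence zero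
  have hsd_sub : ∀ w, s (d w) - e (s (d w)) = w - e w := fun w => by
    have hcyc : w - (s (d w) - e (s (d w))) ∈ LinearMap.ker d := by
      simp [hsd', hde']
    have := he _ hcyc
    simp only [map_sub, he _ (hde' _), sub_self, sub_zero] at this
    rw [eq_sub_iff_add_eq, this]; abel
  refine ⟨hri, hdi, hrd, ?_, ?_, ?_, ?_⟩
  · ext w
    obtain ⟨v, hv⟩ := hrange w
    have hdh : d (s (e w - i (r w))) = e w - i (r w) := by rw [← hv, hsd']
    have hhd : e (d w) - i (r (d w)) = d w := by rw [hed, hrd', map_zero, sub_zero]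
    simp only [LinearMap.add_apply, LinearMap.comp_apply, LinearMap.sub_apply,
      LinearMap.id_apply]
    rw [hhd, hsd_sub, map_sub, hde', sub_zero, hdh]
    abel
  · ext x; simp [hei, hri']
  · ext w
    simp [hre']
  · have heε' : ∀ w, e (ε w) = ε (e w) := LinearMap.congr_fun heε
    have hsε' : ∀ w, s (ε w) = -ε (s w) := LinearMap.congr_fun hsε
    have hirε' : ∀ w, i (r (ε w)) = ε (i (r w)) := LinearMap.congr_fun hirε
    ext w
    simp [heε', hsε', hirε']
    abel

theorem exists_isOddDeformationRetract [NeZero (2 : K)] (hε : ε ∘ₗ ε = LinearMap.id)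
    (hdd : d ∘ₗ d = 0) (hd : d ∘ₗ ε = -(ε ∘ₗ d))
    (hker : ∀ x ∈ LinearMap.ker d, ε x ∈ LinearMap.ker d) {εH : Homology d →ₗ[K] Homology d}
    (hεH : ∀ w : ↥(LinearMap.ker d),
      εH (Submodule.Quotient.mk w) = Submodule.Quotient.mk ⟨ε ↑w, hker ↑w w.2⟩)
    {σ : Homology d →ₗ[K] ↥(LinearMap.ker d)}
    (hσ : ((LinearMap.range d).comap (LinearMap.ker d).subtype).mkQ ∘ₗ σ = LinearMap.id)
    (hσε : ∀ x : Homology d, (↑(σ (εH x)) : W) = ε ↑(σ x)) :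
    ∃ (ρ : W →ₗ[K] Homology d) (h : W →ₗ[K] W),
      IsOddDeformationRetract ε d ((LinearMap.ker d).subtype ∘ₗ σ) ρ h ∧
        ρ ∘ₗ ε = εH ∘ₗ ρ := by
  obtain ⟨e, hde, he, heε⟩ := exists_retraction_ker_comm hε hd
  obtain ⟨s, hsd, hsε⟩ := exists_generalizedInverse_anticomm hε hd
  set B := (LinearMap.range d).comap (LinearMap.ker d).subtype
  set e' : W →ₗ[K] LinearMap.ker d := e.codRestrict _ (LinearMap.congr_fun hde)
  set ρ := B.mkQ ∘ₗ e'
  have he' : ∀ z : LinearMap.ker d, e' z = z := fun z => Subtype.ext (he z z.2)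
  have hρ : ∀ w, ρ w = Submodule.Quotient.mk (e' w) := fun _ => rfl
  have hρσ : ∀ x, ρ (σ x) = x := fun x => by
    rw [hρ, he']; exact LinearMap.congr_fun hσ x
  have hρε : ρ ∘ₗ ε = εH ∘ₗ ρ := by
    ext w
    have : e' (ε w) = ⟨ε (e w), hker _ (e' w).2⟩ :=
      Subtype.ext (LinearMap.congr_fun heε w)
    simp only [LinearMap.comp_apply, hρ, this, hεH]
    rfl
  refine ⟨ρ, _, isOddDeformationRetract_of_retraction hdd hde he hsd
    (LinearMap.ext hρσ) ?_ ?_ ?_ (fun w => ?_) heε hsε ?_, hρε⟩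
  · exact LinearMap.ext fun x => (σ x).2
  · ext w
    rw [LinearMap.comp_apply, hρ, LinearMap.zero_apply, Submodule.Quotient.mk_eq_zero,
      show e' (d w) = ⟨d w, LinearMap.congr_fun hdd w⟩ from he' ⟨_, _⟩]
    exact LinearMap.mem_range_self d w
  · ext w
    rw [LinearMap.comp_apply, hρ, hρ, show e' (e w) = e' w from he' (e' w)]
  · have hσρ : (Submodule.Quotient.mk (σ (ρ w)) : Homology d) = ρ w :=
      LinearMap.congr_fun hσ (ρ w)
    have : e' w - σ (ρ w) ∈ B := by
      rw [← Submodule.Quotient.mk_eq_zero, Submodule.Quotient.mk_sub, hσρ, ← hρ, sub_self]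
    exact this
  · have hρε' : ∀ w, ρ (ε w) = εH (ρ w) := LinearMap.congr_fun hρε
    ext w
    simp [← hσε, hρε']

end DeformationRetract

namespace IsOddDeformationRetract

variable {ε d h : W →ₗ[K] W} {i : W' →ₗ[K] W} {r : W →ₗ[K] W'}
  (hR : IsOddDeformationRetract ε d i r h)
include hR

theorem laplacian_tensorMap (x : TensorAlgebra K W') :
    laplacian ε d h (tensorMap i x) = 0 := by
  simp [laplacian_apply, oddDerivation_tensorMap hR.d_comp_i,
    oddDerivation_tensorMap hR.h_comp_i]

theorem tensorMap_laplacian (x : TensorAlgebra K W) :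
    tensorMap r (laplacian ε d h x) = 0 := by
  simp [laplacian_apply, tensorMap_oddDerivation hR.r_comp_d,
    tensorMap_oddDerivation hR.r_comp_h]

theorem ι_sub_mem_eigenspace_one (w : W) :
    ι K (w - i (r w)) ∈ (laplacian ε d h).eigenspace 1 := by
  have hN : ∀ v, laplacian ε d h (ι K v) = ι K (v - i (r v)) := fun v => by
    simpa [laplacian_ι] using congr_arg (ι K) (LinearMap.congr_fun hR.homotopy v)
  have hri : r (i (r w)) = r w := LinearMap.congr_fun hR.r_comp_i (r w)
  simp [hN, hri]

variable (hε : ε ∘ₗ ε = LinearMap.id) (hd : d ∘ₗ ε = -(ε ∘ₗ d))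
include hε hd

theorem gradedFreeLie_le_iSup_eigenspace_laplacian :
    gradedFreeLie K ε ≤ ⨆ μ, gradedFreeLie K ε ⊓ (laplacian ε d h).eigenspace μ := by
  refine gradedFreeLie_le_iSup_eigenspace (laplacian_mul hε hd hR.h_comp_ε)
    (laplacian_parityT hε hd hR.h_comp_ε) fun w => ?_
  rw [← sub_add_cancel w (i (r w)), map_add]
  refine add_mem (Submodule.mem_iSup_of_mem 1 ⟨ι_mem_gradedFreeLie ε _, ?_⟩)
    (Submodule.mem_iSup_of_mem 0 ⟨ι_mem_gradedFreeLie ε _, ?_⟩)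
  · simpa using hR.ι_sub_mem_eigenspace_one w
  · simpa using hR.laplacian_tensorMap (ι K (r w))

variable [CharZero K]

theorem tensorMap_tensorMap_eq_self {x : TensorAlgebra K W}
    (hx : x ∈ (laplacian ε d h).eigenspace 0) : tensorMap i (tensorMap r x) = x :=
  apply_eq_self_of_mem_eigenspace_zero (laplacian_mul hε hd hR.h_comp_ε)
    (q := (tensorMap i).comp (tensorMap r)) (fun _ => hR.laplacian_tensorMap _)
    (fun w => by simpa using hR.ι_sub_mem_eigenspace_one w) hx

theorem sub_mem_map_oddDerivation_of_mem_eigenspace {μ : K} {g : TensorAlgebra K W}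
    (hg : g ∈ gradedFreeLie K ε) (hgμ : g ∈ (laplacian ε d h).eigenspace μ)
    (hDg : oddDerivation ε d g = 0) :
    g - tensorMap i (tensorMap r g) ∈ (gradedFreeLie K ε).map (oddDerivation ε d) := by
  rcases eq_or_ne μ 0 with rfl | hμ
  · simp [hR.tensorMap_tensorMap_eq_self hε hd hgμ]
  have hNg : laplacian ε d h g = μ • g := mem_eigenspace_iff.1 hgμ
  have hrg : tensorMap r g = 0 := by
    simpa [hNg, hμ] using hR.tensorMap_laplacian g
  -- on the `μ`-eigenspace, `D ∘ H + H ∘ D = μ`, so a cycle `g` is the boundary of `μ⁻¹ H g`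
  refine ⟨μ⁻¹ • oddDerivation ε h g,
    Submodule.smul_mem _ _ (oddDerivation_mem_gradedFreeLie hε hR.h_comp_ε hg), ?_⟩
  have hDHg : oddDerivation ε d (oddDerivation ε h g) = μ • g := by
    rw [← hNg, laplacian_apply, hDg, map_zero, add_zero]
  rw [hrg, map_zero, sub_zero, map_smul, hDHg, inv_smul_smul₀ hμ]

theorem sub_mem_map_oddDerivation (hdd : d ∘ₗ d = 0) {z : TensorAlgebra K W}
    (hz : z ∈ gradedFreeLie K ε) (hDz : oddDerivation ε d z = 0) :
    z - tensorMap i (tensorMap r z) ∈ (gradedFreeLie K ε).map (oddDerivation ε d) := by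
  have hz' := mem_iSup_inf_eigenspace_inf_ker (oddDerivation_laplacian hε hd hdd)
    (hR.gradedFreeLie_le_iSup_eigenspace_laplacian hε hd hz) hDz
  clear hz hDz
  induction hz' using Submodule.iSup_induction' with
  | mem μ g hg =>
    exact hR.sub_mem_map_oddDerivation_of_mem_eigenspace hε hd hg.1.1 hg.1.2 hg.2
  | zero => simp
  | add a b _ _ ha hb => simpa [add_sub_add_comm] using add_mem ha hb

end IsOddDeformationRetract

end GradedFreeLie

open GradedFreeLie in
theorem stmt18_general {K W : Type*} [Field K] [CharZero K] [AddCommGroup W] [Module K W]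
    (εW : W →ₗ[K] W) (hε2 : εW ∘ₗ εW = LinearMap.id)
    (d : W →ₗ[K] W) (hd2 : d ∘ₗ d = 0) (hodd : d ∘ₗ εW = -(εW ∘ₗ d))
    (D : TensorAlgebra K W →ₗ[K] TensorAlgebra K W)
    (hDι : D ∘ₗ (TensorAlgebra.ι K : W →ₗ[K] TensorAlgebra K W)
      = (TensorAlgebra.ι K : W →ₗ[K] TensorAlgebra K W) ∘ₗ d)
    (hLeib : ∀ a b : TensorAlgebra K W, D (a * b) = D a * b + parityT εW a * D b)
    (hker : ∀ x ∈ LinearMap.ker d, εW x ∈ LinearMap.ker d)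
    (εH : Homology d →ₗ[K] Homology d)
    (hεH : ∀ w : ↥(LinearMap.ker d),
      εH (Submodule.Quotient.mk w) = Submodule.Quotient.mk ⟨εW ↑w, hker ↑w w.2⟩)
    (σ : Homology d →ₗ[K] ↥(LinearMap.ker d))
    (hσ : ((LinearMap.range d).comap (LinearMap.ker d).subtype).mkQ ∘ₗ σ = LinearMap.id)
    (hσε : ∀ x : Homology d, (↑(σ (εH x)) : W) = εW ↑(σ x)) :
    let Lf : Submodule K (TensorAlgebra K W) := gradedFreeLie K εW
    let Z : Submodule K (TensorAlgebra K W) := Lf ⊓ LinearMap.ker D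
    let Bd : Submodule K (TensorAlgebra K W) := Submodule.map D Lf ⊓ Z
    let Φ : TensorAlgebra K (Homology d) →ₐ[K] TensorAlgebra K W :=
      TensorAlgebra.lift K
        ((TensorAlgebra.ι K : W →ₗ[K] TensorAlgebra K W) ∘ₗ
          ((LinearMap.ker d).subtype ∘ₗ σ))
    ∃ hcyc : ∀ x ∈ gradedFreeLie K εH, Φ x ∈ Z,
      Function.Bijective (fun x : ↥(gradedFreeLie K εH) =>
        (Submodule.Quotient.mk (⟨Φ ↑x, hcyc ↑x x.2⟩ : ↥Z) : ↥Z ⧸ Bd.comap Z.subtype)) := by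
  intro Lf Z Bd Φ
  obtain ⟨ρ, h, hR, hρε⟩ := exists_isOddDeformationRetract hε2 hd2 hodd hker hεH hσ hσε
  obtain rfl : D = oddDerivation εW d := eq_oddDerivation hDι hLeib
  have hleft : Function.LeftInverse (tensorMap ρ) Φ := tensorMap_tensorMap hR.r_comp_i
  have hcyc : ∀ x ∈ gradedFreeLie K εH, Φ x ∈ Z := fun x hx =>
    ⟨tensorMap_mem_gradedFreeLie (LinearMap.ext hσε) hx, oddDerivation_tensorMap hR.d_comp_i x⟩
  refine ⟨hcyc, fun x y hxy => ?_, fun c => ?_⟩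
  · obtain ⟨⟨w, -, hw⟩, -⟩ := (Submodule.Quotient.eq _).1 hxy
    have := congr_arg (tensorMap ρ) hw
    rw [tensorMap_oddDerivation hR.r_comp_d] at this
    simp only [map_sub, Submodule.subtype_apply, hleft _] at this
    exact Subtype.ext (sub_eq_zero.1 this.symm)
  · obtain ⟨z, rfl⟩ := Submodule.Quotient.mk_surjective _ c
    have hx := tensorMap_mem_gradedFreeLie hρε z.2.1
    refine ⟨⟨tensorMap ρ z, hx⟩, (Submodule.Quotient.eq _).2 ?_⟩
    obtain ⟨w, hw, hDw⟩ := hR.sub_mem_map_oddDerivation hε2 hodd hd2 z.2.1 z.2.2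
    refine ⟨⟨-w, neg_mem hw, ?_⟩, sub_mem (hcyc _ hx) z.2⟩
    rw [map_neg, hDw, neg_sub]
    rfl

/-- over a field `K` of characteristic zero, the free (graded) Lie algebra
functor commutes with homology.  Let `(W, d)` be a finite-dimensional complex of
`K`-vector spaces (with grading encoded by the parity operator `εW`, `d` odd of square
zero), and let `D` be the extension of `d` to the tensor algebra as a graded derivation of
square zero; `D` restricts to a Lie derivation of the free graded Lie algebra
`L(W) ⊆ T(W)`.  Then the natural map `L(H(W,d)) → H(L(W), D)`, induced by a choice `σ` of
(parity-compatible) inclusion of cycles, is an isomorphism (it lands in cycles and the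
induced map to homology is bijective, hence an isomorphism of Lie algebras). -/
theorem stmt18 {K W : Type*} [Field K] [CharZero K] [AddCommGroup W] [Module K W]
    [FiniteDimensional K W]
    (εW : W →ₗ[K] W) (hε2 : εW ∘ₗ εW = LinearMap.id)
    (d : W →ₗ[K] W) (hd2 : d ∘ₗ d = 0) (hodd : d ∘ₗ εW = -(εW ∘ₗ d))
    (D : TensorAlgebra K W →ₗ[K] TensorAlgebra K W)
    (hDι : D ∘ₗ (TensorAlgebra.ι K : W →ₗ[K] TensorAlgebra K W)
      = (TensorAlgebra.ι K : W →ₗ[K] TensorAlgebra K W) ∘ₗ d)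
    (hD2 : D ∘ₗ D = 0)
    (hLeib : ∀ a b : TensorAlgebra K W, D (a * b) = D a * b + parityT εW a * D b)
    (hker : ∀ x ∈ LinearMap.ker d, εW x ∈ LinearMap.ker d)
    (εH : Homology d →ₗ[K] Homology d)
    (hεH : ∀ w : ↥(LinearMap.ker d),
      εH (Submodule.Quotient.mk w) = Submodule.Quotient.mk ⟨εW ↑w, hker ↑w w.2⟩)
    (σ : Homology d →ₗ[K] ↥(LinearMap.ker d))
    (hσ : ((LinearMap.range d).comap (LinearMap.ker d).subtype).mkQ ∘ₗ σ = LinearMap.id)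
    (hσε : ∀ x : Homology d, (↑(σ (εH x)) : W) = εW ↑(σ x)) :
    let Lf : Submodule K (TensorAlgebra K W) := gradedFreeLie K εW
    let Z : Submodule K (TensorAlgebra K W) := Lf ⊓ LinearMap.ker D
    let Bd : Submodule K (TensorAlgebra K W) := Submodule.map D Lf ⊓ Z
    let Φ : TensorAlgebra K (Homology d) →ₐ[K] TensorAlgebra K W :=
      TensorAlgebra.lift K
        ((TensorAlgebra.ι K : W →ₗ[K] TensorAlgebra K W) ∘ₗ
          ((LinearMap.ker d).subtype ∘ₗ σ))
    ∃ hcyc : ∀ x ∈ gradedFreeLie K εH, Φ x ∈ Z,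
      Function.Bijective (fun x : ↥(gradedFreeLie K εH) =>
        (Submodule.Quotient.mk (⟨Φ ↑x, hcyc ↑x x.2⟩ : ↥Z) : ↥Z ⧸ Bd.comap Z.subtype)) :=
  stmt18_general εW hε2 d hd2 hodd D hDι hLeib hker εH hεH σ hσ hσε
end
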